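/- arXiv:2409.08220 — 6 statements merged into one kernel-verified Lean document; each statement's English description precedes it below -/
import Mathlib

section
/- Let U, X, Y be real Banach spaces, let ι : X → Y be an injective continuous linear map, and let V ⊆ U be a nonempty open convex set. Let G : V → X, let dG : V → L(U, X) be continuous (L(U,X) denoting continuous linear maps with the operator norm), and let d²G : V → L(U, L(U, X)) be continuous with M := sup_{u ∈ V} ‖d²G(u)‖ < ∞. Assume: (i) for every u ∈ V and h ∈ U, the map t ↦ ι(G(u + t h)) (defined for small real t) is differentiable at t = 0 with derivative ι(dG(u) h); (ii) for every u ∈ V and h, h' ∈ U, the map t ↦ ι(dG(u + t h') h) is differentiable at t = 0 with derivative ι((d²G(u) h') h). Then G is Fréchet differentiable at every u ∈ V with Fréchet derivative dG(u); moreover ‖G(u + δu) − G(u) − dG(u) δu‖_X ≤ M ‖δu‖² whenever u and u + δu lie in V, and ‖dG(u) − dG(u')‖ ≤ M ‖u − u'‖ for all u, u' ∈ V. -/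
open intervalIntegral MeasureTheory

private lemma shift_deriv' {Y U : Type*}
    [NormedAddCommGroup U] [NormedSpace ℝ U]
    [NormedAddCommGroup Y] [NormedSpace ℝ Y]
    (F : U → Y) (u δu : U) (t : ℝ) (D : Y)
    (h0 : HasDerivAt (fun s : ℝ => F (u + t • δu + s • δu)) D 0) :
    HasDerivAt (fun s : ℝ => F (u + s • δu)) D t := by
  have hst : HasDerivAt (fun s : ℝ => s - t) 1 t := (hasDerivAt_id t).sub_const t
  have h1 : HasDerivAt ((fun s : ℝ => F (u + t • δu + s • δu)) ∘ fun s : ℝ => s - t)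
      ((1 : ℝ) • D) t := by
    apply HasDerivAt.scomp
    · simpa using h0
    · exact hst
  have heq : ((fun s : ℝ => F (u + t • δu + s • δu)) ∘ fun s : ℝ => s - t)
      = fun s : ℝ => F (u + s • δu) := by
    funext s
    simp only [Function.comp]
    congr 1
    module
  rw [heq, one_smul] at h1
  exact h1

private lemma seg_integral' {X Y : Type*}
    [NormedAddCommGroup X] [NormedSpace ℝ X] [CompleteSpace X]
    [NormedAddCommGroup Y] [NormedSpace ℝ Y] [CompleteSpace Y]
    (ι : X →L[ℝ] Y) (hι : Function.Injective ι)
    (f g : ℝ → X) (hg : ContinuousOn g (Set.Icc 0 1))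
    (hderiv : ∀ t ∈ Set.Icc (0:ℝ) 1, HasDerivAt (fun s => ι (f s)) (ι (g t)) t) :
    f 1 - f 0 = ∫ t in (0:ℝ)..1, g t := by
  have huIcc : Set.uIcc (0:ℝ) 1 = Set.Icc 0 1 := Set.uIcc_of_le zero_le_one
  have hgi : IntervalIntegrable g volume 0 1 := by
    apply ContinuousOn.intervalIntegrable; rwa [huIcc]
  have hgi' : IntervalIntegrable (fun t => ι (g t)) volume 0 1 := by
    apply ContinuousOn.intervalIntegrable
    rw [huIcc]; exact ι.continuous.comp_continuousOn hg
  have hFTC : ∫ t in (0:ℝ)..1, ι (g t) = ι (f 1) - ι (f 0) :=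
    integral_eq_sub_of_hasDerivAt (fun t ht => hderiv t (huIcc ▸ ht)) hgi'
  have hcomm : ∫ t in (0:ℝ)..1, ι (g t) = ι (∫ t in (0:ℝ)..1, g t) :=
    ι.intervalIntegral_comp_comm hgi
  apply hι
  rw [map_sub, ← hFTC, hcomm]

/-- Differentiability up to boundedness of second Gateaux derivatives:
if `G : V → X` has continuous Gateaux derivatives `dG` and `d²G` (witnessed through an
injective continuous linear embedding `ι : X → Y`), and the second derivative is bounded
by `M` on the open convex set `V`, then `G` is Fréchet differentiable on `V` with
derivative `dG`, with quadratic Taylor estimate and Lipschitz estimate for `dG`. -/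
theorem frechet_of_bounded_second_gateaux
    {U X Y : Type*}
    [NormedAddCommGroup U] [NormedSpace ℝ U] [CompleteSpace U]
    [NormedAddCommGroup X] [NormedSpace ℝ X] [CompleteSpace X]
    [NormedAddCommGroup Y] [NormedSpace ℝ Y] [CompleteSpace Y]
    (ι : X →L[ℝ] Y) (hι : Function.Injective ι)
    (V : Set U) (hVne : V.Nonempty) (hVopen : IsOpen V) (hVconv : Convex ℝ V)
    (G : U → X) (dG : U → (U →L[ℝ] X)) (d2G : U → (U →L[ℝ] (U →L[ℝ] X)))
    (hdG_cont : ContinuousOn dG V) (hd2G_cont : ContinuousOn d2G V)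
    (M : ℝ) (hM : ∀ u ∈ V, ‖d2G u‖ ≤ M)
    (hGateaux1 : ∀ u ∈ V, ∀ h : U,
      HasDerivAt (fun t : ℝ => ι (G (u + t • h))) (ι (dG u h)) 0)
    (hGateaux2 : ∀ u ∈ V, ∀ h h' : U,
      HasDerivAt (fun t : ℝ => ι (dG (u + t • h') h)) (ι ((d2G u h') h)) 0) :
    (∀ u ∈ V, HasFDerivAt G (dG u) u) ∧
    (∀ u ∈ V, ∀ δu : U, u + δu ∈ V →
      ‖G (u + δu) - G u - dG u δu‖ ≤ M * ‖δu‖ ^ 2) ∧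
    (∀ u ∈ V, ∀ u' ∈ V, ‖dG u - dG u'‖ ≤ M * ‖u - u'‖) := by
  obtain ⟨u₀, hu₀⟩ := hVne
  have hM0 : 0 ≤ M := le_trans (norm_nonneg (d2G u₀)) (hM u₀ hu₀)
  -- membership of segment points
  have hseg : ∀ u ∈ V, ∀ δu : U, u + δu ∈ V → ∀ t ∈ Set.Icc (0:ℝ) 1, u + t • δu ∈ V := by
    intro u hu δu hu' t ht
    have hmem := hVconv hu hu' (by linarith [ht.2] : (0:ℝ) ≤ 1 - t) ht.1 (by ring)
    have : (1 - t) • u + t • (u + δu) = u + t • δu := by module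
    rwa [this] at hmem
  -- continuity of the path
  have hpath : ∀ (u δu : U), Continuous (fun t : ℝ => u + t • δu) := by
    intro u δu; fun_prop
  -- Lipschitz estimate for dG
  have hLip : ∀ u ∈ V, ∀ u' ∈ V, ‖dG u - dG u'‖ ≤ M * ‖u - u'‖ := by
    intro u hu u' hu'
    set δu := u - u' with hδu
    have huδ : u' + δu ∈ V := by
      have : u' + δu = u := by rw [hδu]; abel
      rwa [this]
    have hmem : ∀ t ∈ Set.Icc (0:ℝ) 1, u' + t • δu ∈ V := hseg u' hu' δu huδ
    have key : ∀ h : U, dG u h - dG u' h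
        = ∫ t in (0:ℝ)..1, (d2G (u' + t • δu) δu) h := by
      intro h
      have hcont : ContinuousOn (fun t : ℝ => (d2G (u' + t • δu) δu) h) (Set.Icc 0 1) := by
        have h1 : ContinuousOn (fun t : ℝ => d2G (u' + t • δu)) (Set.Icc 0 1) :=
          hd2G_cont.comp (hpath u' δu).continuousOn (fun t ht => hmem t ht)
        exact (h1.clm_apply continuousOn_const).clm_apply continuousOn_const
      have hder : ∀ t ∈ Set.Icc (0:ℝ) 1,
          HasDerivAt (fun s : ℝ => ι (dG (u' + s • δu) h))
            (ι ((d2G (u' + t • δu) δu) h)) t := by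
        intro t ht
        apply shift_deriv' (fun v => ι (dG v h)) u' δu t
        have := hGateaux2 (u' + t • δu) (hmem t ht) h δu
        simpa using this
      have := seg_integral' ι hι (fun t : ℝ => dG (u' + t • δu) h)
        (fun t : ℝ => (d2G (u' + t • δu) δu) h) hcont hder
      simp only [one_smul, zero_smul, add_zero] at this
      rw [show u' + δu = u by rw [hδu]; abel] at this
      exact this
    apply ContinuousLinearMap.opNorm_le_bound _ (by positivity)
    intro h
    rw [ContinuousLinearMap.sub_apply, key h]
    have hbound : ∀ t ∈ Set.uIoc (0:ℝ) 1,
        ‖(d2G (u' + t • δu) δu) h‖ ≤ M * ‖δu‖ * ‖h‖ := by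
      intro t ht
      rw [Set.uIoc_of_le zero_le_one] at ht
      have htI : t ∈ Set.Icc (0:ℝ) 1 := ⟨le_of_lt ht.1, ht.2⟩
      calc ‖(d2G (u' + t • δu) δu) h‖
          ≤ ‖d2G (u' + t • δu) δu‖ * ‖h‖ := ContinuousLinearMap.le_opNorm _ _
        _ ≤ ‖d2G (u' + t • δu)‖ * ‖δu‖ * ‖h‖ := by
            gcongr; exact ContinuousLinearMap.le_opNorm _ _
        _ ≤ M * ‖δu‖ * ‖h‖ := by gcongr; exact hM _ (hmem t htI)
    calc ‖∫ t in (0:ℝ)..1, (d2G (u' + t • δu) δu) h‖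
        ≤ M * ‖δu‖ * ‖h‖ * |1 - 0| :=
          intervalIntegral.norm_integral_le_of_norm_le_const hbound
      _ = M * ‖u - u'‖ * ‖h‖ := by rw [hδu]; simp
  -- quadratic Taylor estimate
  have hQuad : ∀ u ∈ V, ∀ δu : U, u + δu ∈ V →
      ‖G (u + δu) - G u - dG u δu‖ ≤ M * ‖δu‖ ^ 2 := by
    intro u hu δu hu'
    have hmem : ∀ t ∈ Set.Icc (0:ℝ) 1, u + t • δu ∈ V := hseg u hu δu hu'
    have hcont : ContinuousOn (fun t : ℝ => dG (u + t • δu) δu) (Set.Icc 0 1) := by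
      have h1 : ContinuousOn (fun t : ℝ => dG (u + t • δu)) (Set.Icc 0 1) :=
        hdG_cont.comp (hpath u δu).continuousOn (fun t ht => hmem t ht)
      exact h1.clm_apply continuousOn_const
    have hder : ∀ t ∈ Set.Icc (0:ℝ) 1,
        HasDerivAt (fun s : ℝ => ι (G (u + s • δu))) (ι (dG (u + t • δu) δu)) t := by
      intro t ht
      apply shift_deriv' (fun v => ι (G v)) u δu t
      exact hGateaux1 (u + t • δu) (hmem t ht) δu
    have key : G (u + δu) - G u = ∫ t in (0:ℝ)..1, dG (u + t • δu) δu := by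
      have := seg_integral' ι hι (fun t : ℝ => G (u + t • δu))
        (fun t : ℝ => dG (u + t • δu) δu) hcont hder
      simp only [one_smul, zero_smul, add_zero] at this
      exact this
    have hgi : IntervalIntegrable (fun t : ℝ => dG (u + t • δu) δu) volume 0 1 := by
      apply ContinuousOn.intervalIntegrable
      rwa [Set.uIcc_of_le zero_le_one]
    have hsplit : G (u + δu) - G u - dG u δu
        = ∫ t in (0:ℝ)..1, (dG (u + t • δu) δu - dG u δu) := by
      rw [intervalIntegral.integral_sub hgi intervalIntegrable_const,
        intervalIntegral.integral_const, key]
      simp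
    rw [hsplit]
    have hbound : ∀ t ∈ Set.uIoc (0:ℝ) 1,
        ‖dG (u + t • δu) δu - dG u δu‖ ≤ M * ‖δu‖ ^ 2 := by
      intro t ht
      rw [Set.uIoc_of_le zero_le_one] at ht
      have htI : t ∈ Set.Icc (0:ℝ) 1 := ⟨le_of_lt ht.1, ht.2⟩
      calc ‖dG (u + t • δu) δu - dG u δu‖
          = ‖(dG (u + t • δu) - dG u) δu‖ := by rw [ContinuousLinearMap.sub_apply]
        _ ≤ ‖dG (u + t • δu) - dG u‖ * ‖δu‖ := ContinuousLinearMap.le_opNorm _ _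
        _ ≤ (M * ‖u + t • δu - u‖) * ‖δu‖ := by
            gcongr; exact hLip _ (hmem t htI) u hu
        _ = M * (t * ‖δu‖) * ‖δu‖ := by
            rw [add_sub_cancel_left, norm_smul, Real.norm_eq_abs,
              abs_of_nonneg (le_of_lt ht.1)]
        _ ≤ M * (1 * ‖δu‖) * ‖δu‖ := by gcongr; exact ht.2
        _ = M * ‖δu‖ ^ 2 := by ring
    calc ‖∫ t in (0:ℝ)..1, (dG (u + t • δu) δu - dG u δu)‖
        ≤ M * ‖δu‖ ^ 2 * |1 - 0| :=
          intervalIntegral.norm_integral_le_of_norm_le_const hbound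
      _ = M * ‖δu‖ ^ 2 := by simp
  refine ⟨?_, hQuad, hLip⟩
  intro u hu
  rw [hasFDerivAt_iff_isLittleO_nhds_zero, Asymptotics.isLittleO_iff]
  intro c hc
  obtain ⟨ε, hε, hball⟩ := Metric.isOpen_iff.mp hVopen u hu
  have hδpos : 0 < min ε (c / (M + 1)) := lt_min hε (div_pos hc (by linarith))
  filter_upwards [Metric.ball_mem_nhds 0 hδpos] with δu hδu
  rw [mem_ball_zero_iff] at hδu
  have h1 : ‖δu‖ < ε := lt_of_lt_of_le hδu (min_le_left _ _)
  have h2 : ‖δu‖ < c / (M + 1) := lt_of_lt_of_le hδu (min_le_right _ _)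
  have hin : u + δu ∈ V := by
    apply hball
    rw [Metric.mem_ball, dist_eq_norm, add_sub_cancel_left]
    exact h1
  have hq := hQuad u hu δu hin
  have h2' : ‖δu‖ * (M + 1) < c := (lt_div_iff₀ (by linarith)).mp h2
  calc ‖G (u + δu) - G u - dG u δu‖ ≤ M * ‖δu‖ ^ 2 := hq
    _ ≤ c * ‖δu‖ := by nlinarith [norm_nonneg δu, h2', hM0]
end

section
/- Let c ∈ [0, 1) and k ∈ ℤ. Then ∫_0^{2π} e^{i k α} · log |1 − c e^{iα}| dα = − π c^{|k|} / |k| if k ≠ 0, and ∫_0^{2π} log |1 − c e^{iα}| dα = 0. -/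
open Real intervalIntegral

/-! Taking real parts in `-log (1 - z) = ∑ zⁿ / n` gives
`log |1 - c e^{iα}| = -∑_{n ≥ 1} cⁿ cos (nα) / n`, a series dominated by `∑ |c|ⁿ`, so it may be
integrated term by term against `e^{ikα}`. By orthogonality,
`∫₀^{2π} e^{ikα} cos (nα) dα = π ([k + n = 0] + [k = n])`, so only the term `n = |k|` survives. -/

lemma Complex.hasSum_log_norm_one_sub {z : ℂ} (hz : ‖z‖ < 1) :
    HasSum (fun n : ℕ => -(z ^ n / n).re) (Real.log ‖1 - z‖) := by
  simpa [Complex.log_re] using (Complex.hasSum_re (Complex.hasSum_taylorSeries_neg_log hz)).neg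

lemma hasSum_log_norm_one_sub_mul_exp_mul_I {c : ℝ} (hc : |c| < 1) (α : ℝ) :
    HasSum (fun n : ℕ => -(c ^ n / n * Real.cos (n * α)))
      (Real.log ‖1 - c * Complex.exp (α * Complex.I)‖) := by
  convert Complex.hasSum_log_norm_one_sub (z := c * Complex.exp (α * Complex.I)) ?_ using 3 with n
  · rw [mul_pow, ← Complex.exp_nat_mul, ← mul_assoc]
    norm_cast
    rw [div_mul_eq_mul_div, Complex.div_natCast_re, Complex.re_ofReal_mul,
      Complex.exp_ofReal_mul_I_re, mul_div_right_comm]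
  · simpa [Complex.norm_exp_ofReal_mul_I] using hc

lemma abs_pow_div_mul_cos_le (c x : ℝ) (n : ℕ) : |c ^ n / n * Real.cos x| ≤ |c| ^ n := by
  rw [abs_mul, abs_div, abs_pow, Nat.abs_cast]
  refine (mul_le_of_le_one_right (by positivity) (Real.abs_cos_le_one x)).trans ?_
  rcases n.eq_zero_or_pos with rfl | hn
  · simp
  · exact div_le_self (by positivity) (by exact_mod_cast hn)

lemma integral_exp_int_mul_I (m : ℤ) :
    ∫ α in (0:ℝ)..2 * π, Complex.exp (m * α * Complex.I) = if m = 0 then 2 * π else 0 := by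
  split_ifs with hm
  · simp [hm]
  have hmI : (m : ℂ) * Complex.I ≠ 0 := mul_ne_zero (by exact_mod_cast hm) Complex.I_ne_zero
  simp_rw [mul_right_comm _ _ Complex.I]
  rw [integral_exp_mul_complex hmI]
  push_cast
  rw [show (m : ℂ) * Complex.I * (2 * π) = m * (2 * π * Complex.I) by ring,
    Complex.exp_int_mul_two_pi_mul_I]
  simp

lemma integral_exp_int_mul_I_mul_cos (k n : ℤ) :
    ∫ α in (0:ℝ)..2 * π, Complex.exp (k * α * Complex.I) * Real.cos (n * α)
      = π * ((if k + n = 0 then 1 else 0) + (if k - n = 0 then 1 else 0)) := by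
  have hsplit : ∀ α : ℝ, Complex.exp (k * α * Complex.I) * Real.cos (n * α)
      = (Complex.exp ((k + n : ℤ) * α * Complex.I)
          + Complex.exp ((k - n : ℤ) * α * Complex.I)) / 2 := by
    intro α
    push_cast
    rw [Complex.cos, mul_div_assoc', mul_add, ← Complex.exp_add, ← Complex.exp_add]
    ring_nf
  simp_rw [hsplit]
  rw [integral_div, integral_add (Continuous.intervalIntegrable (by fun_prop) _ _)
    (Continuous.intervalIntegrable (by fun_prop) _ _), integral_exp_int_mul_I,
    integral_exp_int_mul_I]
  split_ifs <;> push_cast <;> ring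

lemma hasSum_integral_exp_int_mul_I_mul_log_norm_one_sub {c : ℝ} (hc : |c| < 1) (k : ℤ) :
    HasSum (fun n : ℕ => -((c : ℂ) ^ n / n) * π *
        ((if k + n = 0 then 1 else 0) + (if k - n = 0 then 1 else 0)))
      (∫ α in (0:ℝ)..2 * π,
        Complex.exp (k * α * Complex.I) * Real.log ‖1 - c * Complex.exp (α * Complex.I)‖) := by
  have hterm : ∀ n : ℕ, ∫ α in (0:ℝ)..2 * π,
      Complex.exp (k * α * Complex.I) * ((-(c ^ n / n * Real.cos (n * α)) : ℝ) : ℂ)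
        = -((c : ℂ) ^ n / n) * π *
            ((if k + n = 0 then 1 else 0) + (if k - n = 0 then 1 else 0)) := by
    intro n
    have hcos := integral_exp_int_mul_I_mul_cos k n
    push_cast at hcos ⊢
    simp_rw [mul_neg, mul_left_comm (Complex.exp _)]
    rw [integral_neg, integral_const_mul, hcos]
    ring
  simp only [← hterm]
  refine hasSum_integral_of_dominated_convergence (fun n _ => |c| ^ n)
    (fun n => (Continuous.aestronglyMeasurable (by fun_prop)))
    (fun n => Filter.Eventually.of_forall fun α _ => ?_)
    (Filter.Eventually.of_forall fun _ _ => summable_geometric_of_lt_one (abs_nonneg c) hc)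
    intervalIntegrable_const
    (Filter.Eventually.of_forall fun α _ =>
      ((Complex.hasSum_ofReal.mpr (hasSum_log_norm_one_sub_mul_exp_mul_I hc α)).mul_left
        (Complex.exp (k * α * Complex.I))))
  have hre : ((k : ℂ) * α * Complex.I).re = 0 := by simp
  rw [norm_mul, Complex.norm_exp, hre, Real.exp_zero, one_mul, Complex.norm_real,
    Real.norm_eq_abs, abs_neg]
  exact abs_pow_div_mul_cos_le c (n * α) n

-- At `k = 0` both sides vanish, the right one through the junk value `x / 0 = 0`.
lemma integral_exp_int_mul_I_mul_log_norm_one_sub {c : ℝ} (hc : |c| < 1) (k : ℤ) :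
    ∫ α in (0:ℝ)..2 * π,
        Complex.exp (k * α * Complex.I) * Real.log ‖1 - c * Complex.exp (α * Complex.I)‖
      = -(π : ℂ) * (c : ℂ) ^ k.natAbs / (k.natAbs : ℂ) := by
  refine ((hasSum_integral_exp_int_mul_I_mul_log_norm_one_sub hc k).unique
    (hasSum_single k.natAbs fun n hn => ?_)).trans ?_
  · have hplus : k + n ≠ 0 := by omega
    have hminus : k - n ≠ 0 := by omega
    simp only [hplus, hminus, ↓reduceIte, add_zero, mul_zero]
  · obtain ⟨n, rfl | rfl⟩ := Int.eq_nat_or_neg k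
    · rcases n.eq_zero_or_pos with rfl | hn
      · simp
      have hplus : (n : ℤ) + n ≠ 0 := by omega
      simp only [Int.natAbs_natCast, hplus, ↓reduceIte, sub_self, zero_add, mul_one, neg_mul]
      ring
    · rcases n.eq_zero_or_pos with rfl | hn
      · simp
      have hminus : -(n : ℤ) - n ≠ 0 := by omega
      simp only [Int.natAbs_neg, Int.natAbs_natCast, neg_add_cancel, ↓reduceIte, hminus,
        add_zero, mul_one, neg_mul]
      ring

/-- For `c ∈ [0,1)` and `k ∈ ℤ`:
`∫_0^{2π} e^{ikα} log|1 − c e^{iα}| dα = −π c^{|k|}/|k|` if `k ≠ 0`, and the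
integral of `log|1 − c e^{iα}|` over `[0, 2π]` vanishes. -/
theorem integral_exp_mul_log_abs_one_sub_c_exp
    (c : ℝ) (hc0 : 0 ≤ c) (hc1 : c < 1) (k : ℤ) :
    (k ≠ 0 →
      ∫ α in (0:ℝ)..(2 * π),
          Complex.exp ((k : ℂ) * (α : ℂ) * Complex.I) *
            (Real.log ‖1 - (c : ℂ) * Complex.exp ((α : ℂ) * Complex.I)‖ : ℂ)
        = -(π : ℂ) * (c : ℂ) ^ k.natAbs / (k.natAbs : ℂ)) ∧
    (∫ α in (0:ℝ)..(2 * π),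
        Real.log ‖1 - (c : ℂ) * Complex.exp ((α : ℂ) * Complex.I)‖ = 0) := by
  have hc : |c| < 1 := abs_lt.mpr ⟨by linarith, hc1⟩
  refine ⟨fun _ => integral_exp_int_mul_I_mul_log_norm_one_sub hc k, ?_⟩
  have hmean := integral_exp_int_mul_I_mul_log_norm_one_sub hc 0
  simp only [Int.cast_zero, zero_mul, Complex.exp_zero, one_mul, Int.natAbs_zero,
    Nat.cast_zero, div_zero, integral_ofReal] at hmean
  exact_mod_cast hmean
end

section
/- The function α ↦ log |e^{iα} − 1| is Lebesgue integrable on [0, 2π], and for every k ∈ ℤ one has ∫_0^{2π} e^{i k α} · log |e^{iα} − 1| dα = − π / |k| if k ≠ 0, and ∫_0^{2π} log |e^{iα} − 1| dα = 0. -/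
/-!
For `|r| < 1` the Taylor series of `-log (1 - z)` gives
`log |r e^{iα} - 1| = -∑ rⁿ cos (nα) / n`, dominated termwise by `|r|ⁿ`, so integrating term by
term gives the Fourier coefficients `-π r^|k| / |k|`. As `r → 1⁻` these converge to the
claimed values: the triangle inequality gives `|e^{iα} - 1| ≤ 2 |r e^{iα} - 1|` for `0 ≤ r ≤ 1`,
so the integrands are dominated by the integrable `log 2 + |log |e^{iα} - 1||`.
-/

open Real MeasureTheory Set Filter Topology Interval
open Complex (I)

theorem integral_exp_int_mul_ofReal_mul_I (m : ℤ) :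
    ∫ α in (0:ℝ)..2 * π, Complex.exp (m * α * I) = if m = 0 then (2 * π : ℂ) else 0 := by
  split_ifs with hm
  · simp [hm]
  have hmI : (m : ℂ) * I ≠ 0 := by simp [hm]
  have hperiod : Complex.exp (m * I * (2 * π : ℝ)) = 1 := by
    rw [Complex.exp_eq_one_iff]; exact ⟨m, by push_cast; ring⟩
  simp_rw [mul_right_comm _ _ I]
  rw [integral_exp_mul_complex hmI, hperiod]
  simp

theorem hasSum_pow_mul_cos_div_eq_neg_log_norm {r : ℝ} (hr : |r| < 1) (α : ℝ) :
    HasSum (fun n : ℕ => r ^ n * cos (n * α) / n)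
      (-log ‖r * Complex.exp (α * I) - 1‖) := by
  have hz : ‖circleMap 0 r α‖ < 1 := by rwa [norm_circleMap_zero]
  have := (Complex.hasSum_taylorSeries_neg_log hz).mapL Complex.reCLM
  simp only [Complex.reCLM_apply, Complex.div_natCast_re, circleMap_zero_pow, circleMap_zero_re,
    Complex.neg_re, Complex.log_re] at this
  rwa [circleMap_zero, norm_sub_rev] at this

theorem integral_exp_int_mul_cos (k : ℤ) {n : ℕ} (hn : n ≠ 0) :
    ∫ α in (0:ℝ)..2 * π, Complex.exp (k * α * I) * cos (n * α)
      = if k.natAbs = n then (π : ℂ) else 0 := by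
  have hsplit : ∀ α : ℝ, Complex.exp (k * α * I) * cos (n * α)
      = (Complex.exp ((k + n : ℤ) * α * I) + Complex.exp ((k - n : ℤ) * α * I)) / 2 := by
    intro α
    rw [Complex.ofReal_cos, Complex.cos, mul_div_assoc', mul_add, ← Complex.exp_add,
      ← Complex.exp_add]
    push_cast; ring_nf
  simp_rw [hsplit]
  rw [intervalIntegral.integral_div, intervalIntegral.integral_add
    (Continuous.intervalIntegrable (by fun_prop) _ _)
    (Continuous.intervalIntegrable (by fun_prop) _ _),
    integral_exp_int_mul_ofReal_mul_I, integral_exp_int_mul_ofReal_mul_I]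
  rcases Int.natAbs_eq k with hk | hk <;> split_ifs <;> first | omega | ring

theorem norm_exp_int_mul_ofReal_mul_I (k : ℤ) (α : ℝ) : ‖Complex.exp (k * α * I)‖ = 1 := by
  rw [← Complex.ofReal_intCast, ← Complex.ofReal_mul, Complex.norm_exp_ofReal_mul_I]

theorem abs_pow_mul_cos_div_le (r x : ℝ) (n : ℕ) : |r ^ n * cos x / n| ≤ |r| ^ n := by
  rcases Nat.eq_zero_or_pos n with rfl | hn
  · simp
  rw [abs_div, abs_mul, abs_pow, Nat.abs_cast]
  exact div_le_of_le_mul₀ n.cast_nonneg (by positivity) <| by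
    nlinarith [abs_cos_le_one x, pow_nonneg (abs_nonneg r) n, (Nat.one_le_cast (α := ℝ)).2 hn]

/-- At `k = 0` the right-hand side is `0` by the convention `x / 0 = 0`, which is also the
true value of the integral. -/
theorem integral_exp_int_mul_log_norm_mul_exp_sub_one {r : ℝ} (hr : |r| < 1) (k : ℤ) :
    ∫ α in (0:ℝ)..2 * π, Complex.exp (k * α * I) * log ‖r * Complex.exp (α * I) - 1‖
      = -(π * r ^ k.natAbs / k.natAbs) := by
  have hsum := intervalIntegral.hasSum_integral_of_dominated_convergence (μ := volume)
    (a := 0) (b := 2 * π)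
    (F := fun (n : ℕ) (α : ℝ) => Complex.exp (k * α * I) * ((r ^ n * cos (n * α) / n : ℝ) : ℂ))
    (fun n _ => |r| ^ n) (fun n => (Continuous.aestronglyMeasurable (by fun_prop)))
    (fun n => .of_forall fun α _ => by
      rw [norm_mul, norm_exp_int_mul_ofReal_mul_I, one_mul, Complex.norm_real, norm_eq_abs]
      exact abs_pow_mul_cos_div_le _ _ _)
    (.of_forall fun _ _ => summable_geometric_of_lt_one (abs_nonneg r) hr)
    intervalIntegrable_const
    (.of_forall fun α _ =>
      (Complex.hasSum_ofReal.2 (hasSum_pow_mul_cos_div_eq_neg_log_norm hr α)).mul_left _)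
  have hterm : ∀ n : ℕ, ∫ α in (0:ℝ)..2 * π,
      Complex.exp (k * α * I) * ((r ^ n * cos (n * α) / n : ℝ) : ℂ)
        = if n = k.natAbs then (π * r ^ k.natAbs / k.natAbs : ℂ) else 0 := by
    intro n
    rcases eq_or_ne n 0 with rfl | hn
    · split_ifs with h
      · simp [← h]
      · simp
    have : ∀ α : ℝ, Complex.exp (k * α * I) * ((r ^ n * cos (n * α) / n : ℝ) : ℂ)
        = (r ^ n / n : ℂ) * (Complex.exp (k * α * I) * cos (n * α)) := by
      intro α; push_cast; ring
    simp_rw [this, intervalIntegral.integral_const_mul, integral_exp_int_mul_cos k hn]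
    obtain rfl | h := eq_or_ne k.natAbs n
    · simp only [if_true]; ring
    · simp [h, h.symm]
  simp only [hterm, Complex.ofReal_neg, mul_neg, intervalIntegral.integral_neg] at hsum
  rw [← hsum.unique (hasSum_ite_eq _ _), neg_neg]

theorem norm_sub_one_le_two_mul_norm_mul_sub_one {w : ℂ} (hw : ‖w‖ = 1) {r : ℝ} (hr0 : 0 ≤ r)
    (hr1 : r ≤ 1) : ‖w - 1‖ ≤ 2 * ‖r * w - 1‖ := by
  have hrw : ‖(r : ℂ) * w‖ = r := by
    rw [norm_mul, hw, Complex.norm_real, norm_of_nonneg hr0, mul_one]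
  have hgap : 1 - r ≤ ‖r * w - 1‖ := by
    simpa only [norm_one, hrw, norm_sub_rev (1 : ℂ)] using norm_sub_norm_le (1 : ℂ) (r * w)
  calc ‖w - 1‖ ≤ ‖w - r * w‖ + ‖r * w - 1‖ := norm_sub_le_norm_sub_add_norm_sub _ _ _
    _ = 1 - r + ‖r * w - 1‖ := by
      rw [← one_sub_mul, norm_mul, hw, mul_one, ← Complex.ofReal_one, ← Complex.ofReal_sub,
        Complex.norm_real, norm_of_nonneg (sub_nonneg.2 hr1)]
    _ ≤ 2 * ‖r * w - 1‖ := by linarith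

theorem abs_log_norm_mul_sub_one_le {w : ℂ} (hw : ‖w‖ = 1) (hw1 : w ≠ 1) {r : ℝ} (hr0 : 0 ≤ r)
    (hr1 : r ≤ 1) : |log ‖r * w - 1‖| ≤ log 2 + |log ‖w - 1‖| := by
  have hlow := norm_sub_one_le_two_mul_norm_mul_sub_one hw hr0 hr1
  have hw1' : 0 < ‖w - 1‖ := norm_pos_iff.2 (sub_ne_zero.2 hw1)
  have hpos : 0 < ‖r * w - 1‖ := by linarith
  have hup : ‖r * w - 1‖ ≤ 2 := by
    calc ‖r * w - 1‖ ≤ ‖(r : ℂ) * w‖ + ‖(1 : ℂ)‖ := norm_sub_le _ _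
      _ ≤ 2 := by
        rw [norm_mul, hw, Complex.norm_real, norm_of_nonneg hr0, norm_one]; linarith
  have hlog_up : log ‖r * w - 1‖ ≤ log 2 := log_le_log hpos hup
  have hlog_low : log ‖w - 1‖ ≤ log 2 + log ‖r * w - 1‖ := by
    rw [← log_mul two_ne_zero hpos.ne']; exact log_le_log hw1' hlow
  rw [abs_le]
  constructor <;> linarith [le_abs_self (log ‖w - 1‖), neg_abs_le (log ‖w - 1‖),
    log_nonneg (one_le_two (α := ℝ))]

theorem ae_exp_ofReal_mul_I_ne_one : ∀ᵐ α : ℝ, Complex.exp (α * I) ≠ 1 := by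
  refine measure_mono_null (fun α hα => ?_)
    ((countable_range fun n : ℤ => n * (2 * π)).measure_zero _)
  obtain ⟨n, hn⟩ := Complex.exp_eq_one_iff.1 (not_not.1 hα)
  have hI : ((n * (2 * π) : ℝ) : ℂ) * I = α * I := by push_cast; rw [hn]; ring
  exact ⟨n, Complex.ofReal_injective (mul_right_cancel₀ Complex.I_ne_zero hI)⟩

theorem intervalIntegrable_log_norm_exp_sub_one :
    IntervalIntegrable (fun α : ℝ => log ‖Complex.exp (α * I) - 1‖) volume 0 (2 * π) := by
  simpa [CircleIntegrable, circleMap_zero] using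
    circleIntegrable_log_norm_sub_const (a := 1) (c := 0) 1

/-- As above, the case `k = 0` holds through `x / 0 = 0`. -/
theorem integral_exp_int_mul_log_norm_exp_sub_one (k : ℤ) :
    ∫ α in (0:ℝ)..2 * π, Complex.exp (k * α * I) * log ‖Complex.exp (α * I) - 1‖
      = -(π / k.natAbs) := by
  have hIoo : Ioo (0 : ℝ) 1 ∈ 𝓝[<] 1 := Ioo_mem_nhdsLT zero_lt_one
  have hbound : ∀ᶠ r : ℝ in 𝓝[<] 1, ∀ᵐ α : ℝ, α ∈ Ι 0 (2 * π) →
      ‖Complex.exp (k * α * I) * log ‖r * Complex.exp (α * I) - 1‖‖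
        ≤ log 2 + |log ‖Complex.exp (α * I) - 1‖| := by
    filter_upwards [hIoo] with r hr
    filter_upwards [ae_exp_ofReal_mul_I_ne_one] with α hα _
    rw [norm_mul, norm_exp_int_mul_ofReal_mul_I, one_mul, Complex.norm_real, norm_eq_abs]
    exact abs_log_norm_mul_sub_one_le (Complex.norm_exp_ofReal_mul_I α) hα hr.1.le hr.2.le
  have hpointwise : ∀ᵐ α : ℝ, α ∈ Ι 0 (2 * π) → Tendsto
      (fun r : ℝ => Complex.exp (k * α * I) * log ‖r * Complex.exp (α * I) - 1‖)
      (𝓝[<] 1) (𝓝 (Complex.exp (k * α * I) * log ‖Complex.exp (α * I) - 1‖)) := by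
    filter_upwards [ae_exp_ofReal_mul_I_ne_one] with α hα _
    have hne : ‖((1 : ℝ) : ℂ) * Complex.exp (α * I) - 1‖ ≠ 0 := by
      simpa [sub_eq_zero] using hα
    have : ContinuousAt (fun r : ℝ => Complex.exp (k * α * I) *
        log ‖r * Complex.exp (α * I) - 1‖) 1 := by
      fun_prop (disch := exact hne)
    simpa using this.tendsto.mono_left nhdsWithin_le_nhds
  have hlim := intervalIntegral.tendsto_integral_filter_of_dominated_convergence _
    (.of_forall fun r => (by fun_prop : Measurable _).aestronglyMeasurable) hbound
    (intervalIntegrable_const.add intervalIntegrable_log_norm_exp_sub_one.abs) hpointwise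
  have hcoeff : ∀ᶠ r : ℝ in 𝓝[<] 1, ∫ α in (0:ℝ)..2 * π,
      Complex.exp (k * α * I) * log ‖r * Complex.exp (α * I) - 1‖
        = -(π * r ^ k.natAbs / k.natAbs) := by
    filter_upwards [hIoo] with r hr
    exact integral_exp_int_mul_log_norm_mul_exp_sub_one (abs_lt.2 ⟨by linarith [hr.1], hr.2⟩) k
  have hpoly : Tendsto (fun r : ℝ => -(π * (r : ℂ) ^ k.natAbs / k.natAbs)) (𝓝[<] 1)
      (𝓝 (-(π / k.natAbs))) := by
    have hcont : Continuous fun r : ℝ => -(π * (r : ℂ) ^ k.natAbs / k.natAbs) := by fun_prop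
    simpa using (hcont.tendsto 1).mono_left nhdsWithin_le_nhds
  exact tendsto_nhds_unique (hlim.congr' hcoeff) hpoly

/-- The function `α ↦ log |e^{iα} − 1|` is integrable on `[0, 2π]`, and for every `k ∈ ℤ`:
`∫_0^{2π} e^{ikα} log|e^{iα} − 1| dα = −π/|k|` if `k ≠ 0`, and the integral of
`log|e^{iα} − 1|` over `[0, 2π]` vanishes. -/
theorem integral_exp_mul_log_abs_exp_sub_one :
    IntegrableOn (fun α : ℝ =>
        Real.log (‖Complex.exp ((α : ℂ) * Complex.I) - 1‖))
      (Set.Icc 0 (2 * π)) volume ∧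
    ∀ k : ℤ,
      (k ≠ 0 →
        ∫ α in (0:ℝ)..(2 * π),
            Complex.exp ((k : ℂ) * (α : ℂ) * Complex.I) *
              (Real.log (‖Complex.exp ((α : ℂ) * Complex.I) - 1‖) : ℂ)
          = -(π : ℂ) / (k.natAbs : ℂ)) ∧
      (∫ α in (0:ℝ)..(2 * π),
          Real.log (‖Complex.exp ((α : ℂ) * Complex.I) - 1‖) = 0) := by
  refine ⟨?_, fun k => ⟨fun _ => ?_, ?_⟩⟩
  · rw [integrableOn_Icc_iff_integrableOn_Ioc, ← intervalIntegrable_iff_integrableOn_Ioc_of_le]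
    exacts [intervalIntegrable_log_norm_exp_sub_one, by positivity]
  · rw [integral_exp_int_mul_log_norm_exp_sub_one, neg_div]
  · have h := integral_exp_int_mul_log_norm_exp_sub_one 0
    simp only [Int.cast_zero, zero_mul, Complex.exp_zero, one_mul, Int.natAbs_zero, Nat.cast_zero,
      div_zero, neg_zero, intervalIntegral.integral_ofReal] at h
    exact_mod_cast h
end

section
/- For every real s > 0, ∫_0^{π} cos(t) / √(2 (1 − cos t) + s) dt = (2 + s) · ∫_0^{π/2} 1 / √(4 sin²(τ) + s) dτ − ∫_0^{π/2} √(4 sin²(τ) + s) dτ. -/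
open Real

lemma sqrt_ne (s : ℝ) (hs : 0 < s) (τ : ℝ) :
    Real.sqrt (4 * Real.sin τ ^ 2 + s) ≠ 0 := by
  have : 0 < 4 * Real.sin τ ^ 2 + s := by positivity
  exact ne_of_gt (Real.sqrt_pos.mpr this)

lemma cont1 (s : ℝ) (hs : 0 < s) :
    Continuous (fun τ : ℝ => 1 / Real.sqrt (4 * Real.sin τ ^ 2 + s)) := by
  apply Continuous.div continuous_const
  · exact (Real.continuous_sqrt.comp (by continuity))
  · exact fun τ => sqrt_ne s hs τ

lemma cont2 (s : ℝ) :
    Continuous (fun τ : ℝ => Real.sqrt (4 * Real.sin τ ^ 2 + s)) :=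
  Real.continuous_sqrt.comp (by continuity)

lemma pointwise (s : ℝ) (hs : 0 < s) (τ : ℝ) :
    Real.cos (2*τ) / Real.sqrt (2 * (1 - Real.cos (2*τ)) + s) * 2
      = (2 + s) * (1 / Real.sqrt (4 * Real.sin τ ^ 2 + s))
        - Real.sqrt (4 * Real.sin τ ^ 2 + s) := by
  have hD : 0 < 4 * Real.sin τ ^ 2 + s := by positivity
  have hsq : Real.sqrt (4 * Real.sin τ ^ 2 + s) * Real.sqrt (4 * Real.sin τ ^ 2 + s)
      = 4 * Real.sin τ ^ 2 + s := Real.mul_self_sqrt hD.le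
  have hcos : Real.cos (2*τ) = 1 - 2 * Real.sin τ ^ 2 := by
    rw [Real.cos_two_mul]
    nlinarith [Real.sin_sq_add_cos_sq τ]
  have harg : 2 * (1 - Real.cos (2*τ)) + s = 4 * Real.sin τ ^ 2 + s := by
    rw [hcos]; ring
  rw [harg]
  field_simp
  nlinarith [hsq, hcos]

/-- Rewriting of the kernel function `F` in terms of (complete elliptic-type) integrals:
for `s > 0`,
`∫_0^π cos t / √(2(1−cos t)+s) dt
  = (2+s) ∫_0^{π/2} dτ/√(4 sin² τ + s) − ∫_0^{π/2} √(4 sin² τ + s) dτ`. -/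
theorem F_eq_elliptic_integrals (s : ℝ) (hs : 0 < s) :
    ∫ t in (0:ℝ)..π, Real.cos t / Real.sqrt (2 * (1 - Real.cos t) + s)
      = (2 + s) * (∫ τ in (0:ℝ)..(π / 2), 1 / Real.sqrt (4 * Real.sin τ ^ 2 + s))
        - ∫ τ in (0:ℝ)..(π / 2), Real.sqrt (4 * Real.sin τ ^ 2 + s) := by
  have h1 : IntervalIntegrable (fun τ : ℝ => 1 / Real.sqrt (4 * Real.sin τ ^ 2 + s))
      MeasureTheory.volume 0 (π/2) := (cont1 s hs).intervalIntegrable _ _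
  have h2 : IntervalIntegrable (fun τ : ℝ => Real.sqrt (4 * Real.sin τ ^ 2 + s))
      MeasureTheory.volume 0 (π/2) := (cont2 s).intervalIntegrable _ _
  have hsub : ∫ t in (0:ℝ)..π, Real.cos t / Real.sqrt (2 * (1 - Real.cos t) + s)
      = 2 * ∫ τ in (0:ℝ)..(π/2),
          Real.cos (2*τ) / Real.sqrt (2 * (1 - Real.cos (2*τ)) + s) := by
    have := intervalIntegral.smul_integral_comp_mul_left
      (fun t : ℝ => Real.cos t / Real.sqrt (2 * (1 - Real.cos t) + s)) (a := 0) (b := π/2) 2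
    simp only [smul_eq_mul, mul_zero] at this
    rw [show (2:ℝ) * (π/2) = π by ring] at this
    exact this.symm
  rw [hsub]
  have key : (∫ τ in (0:ℝ)..(π/2),
      Real.cos (2*τ) / Real.sqrt (2 * (1 - Real.cos (2*τ)) + s)) * 2
      = ∫ τ in (0:ℝ)..(π/2),
        ((2 + s) * (1 / Real.sqrt (4 * Real.sin τ ^ 2 + s))
          - Real.sqrt (4 * Real.sin τ ^ 2 + s)) := by
    rw [← intervalIntegral.integral_mul_const]
    exact intervalIntegral.integral_congr fun τ _ => pointwise s hs τ
  rw [mul_comm] at key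
  rw [key, intervalIntegral.integral_sub (h1.const_mul _) h2,
    intervalIntegral.integral_const_mul]
end

section
/- Define F : (0, ∞) → ℝ by F(s) = ∫_0^{π} cos(t) / √(2 (1 − cos t) + s) dt. Then there exists a constant C > 0 such that |F(s) − log(1/√s)| ≤ C for all s ∈ (0, 1]. -/
/-!
Near `t = 0` the integrand behaves like the model `1 / √(t² + s)`, whose integral over `[0, π]` is
`arsinh (π / √s) = log (2π / √s) + O(s)`. Pointwise the difference is small: writing
`cos t = 1 - (1 - cos t)`, the term `(1 - cos t) / √(2(1 - cos t) + s)` lies in `[0, 1]`, and since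
`t² - t⁴/12 ≤ 2(1 - cos t) ≤ t²`, replacing `2(1 - cos t)` by `t²` in `1 / √(2(1 - cos t) + s)`
costs at most `t`. So `F(s)` is within `π²` of `arsinh (π / √s)`.
-/

open Real

/-- The kernel function `F(s) = ∫_0^π cos t / √(2(1−cos t)+s) dt`. -/
noncomputable def ringKernelF (s : ℝ) : ℝ :=
  ∫ t in (0:ℝ)..π, Real.cos t / Real.sqrt (2 * (1 - Real.cos t) + s)

namespace Real

theorem cos_le_one_sub_sq_div_two_add_pow_four_div (x : ℝ) :
    cos x ≤ 1 - x ^ 2 / 2 + x ^ 4 / 24 := by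
  suffices key : ∀ y, 0 ≤ y → cos y ≤ 1 - y ^ 2 / 2 + y ^ 4 / 24 by
    simpa only [cos_abs, sq_abs, Even.pow_abs ⟨2, rfl⟩] using key |x| (abs_nonneg x)
  intro y hy
  let g : ℝ → ℝ := fun t ↦ 1 - t ^ 2 / 2 + t ^ 4 / 24 - cos t
  have hg : ∀ t, HasDerivAt g (sin t - (t - t ^ 3 / 6)) t := fun t ↦ by
    refine ((((hasDerivAt_const t 1).sub ((hasDerivAt_pow 2 t).div_const 2)).add
      ((hasDerivAt_pow 4 t).div_const 24)).sub (hasDerivAt_cos t)).congr_deriv ?_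
    push_cast
    ring
  have hmono : MonotoneOn g (Set.Ici 0) :=
    monotoneOn_of_deriv_nonneg (convex_Ici 0) (fun t _ ↦ (hg t).continuousAt.continuousWithinAt)
      (fun t _ ↦ (hg t).differentiableAt.differentiableWithinAt)
      (fun t ht ↦ (hg t).deriv ▸ sub_nonneg.2 (sin_ge_sub_cube (interior_subset ht)))
  have := hmono Set.self_mem_Ici (Set.mem_Ici.2 hy) hy
  simp only [g] at this
  norm_num at this
  linarith

theorem abs_arsinh_sub_log_two_mul_le {x : ℝ} (hx : 0 < x) :
    |arsinh x - log (2 * x)| ≤ 1 / (4 * x ^ 2) := by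
  have hroot : √(1 + x ^ 2) ≤ x + 1 / (2 * x) :=
    sqrt_le_iff.2 ⟨by positivity, by field_simp; nlinarith⟩
  have hlow : 2 * x ≤ x + √(1 + x ^ 2) := by
    nlinarith [le_sqrt_of_sq_le (show x ^ 2 ≤ 1 + x ^ 2 by linarith)]
  have hpos : 0 < x + √(1 + x ^ 2) := by positivity
  rw [arsinh, ← log_div hpos.ne' (by positivity),
    abs_of_nonneg (log_nonneg ((one_le_div (by positivity)).2 hlow))]
  calc log ((x + √(1 + x ^ 2)) / (2 * x)) ≤ (x + √(1 + x ^ 2)) / (2 * x) - 1 :=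
        log_le_sub_one_of_pos (by positivity)
    _ ≤ 1 / (4 * x ^ 2) := by
        rw [div_sub_one (by positivity), div_le_div_iff₀ (by positivity) (by positivity)]
        field_simp at hroot ⊢
        nlinarith

end Real

theorem one_div_sqrt_sub_one_div_sqrt_le {a b : ℝ} (hb : 0 < b) (hba : b ≤ a) :
    1 / √b - 1 / √a ≤ (a - b) / (b * √a) := by
  have ha : 0 < a := hb.trans_le hba
  have hsb := sqrt_pos.2 hb
  have hsa := sqrt_pos.2 ha
  rw [div_sub_div _ _ hsb.ne' hsa.ne', div_le_div_iff₀ (by positivity) (by positivity)]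
  have hle : √b ≤ √a := sqrt_le_sqrt hba
  have h1 := sq_sqrt hb.le
  have h2 := sq_sqrt ha.le
  nlinarith [mul_pos hsa hsb, mul_nonneg (mul_nonneg hsa.le hsb.le) (sub_nonneg.2 hle)]

theorem continuous_one_div_sqrt_sq_add {s : ℝ} (hs : 0 < s) :
    Continuous fun t : ℝ ↦ 1 / √(t ^ 2 + s) :=
  continuous_const.div (by fun_prop) fun t ↦ (sqrt_pos.2 (by positivity)).ne'

theorem integral_one_div_sqrt_sq_add {s : ℝ} (hs : 0 < s) (a b : ℝ) :
    ∫ t in a..b, 1 / √(t ^ 2 + s) = arsinh (b / √s) - arsinh (a / √s) := by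
  refine intervalIntegral.integral_eq_sub_of_hasDerivAt (f := fun t ↦ arsinh (t / √s))
    (fun t _ ↦ ?_) ((continuous_one_div_sqrt_sq_add hs).intervalIntegrable a b)
  refine ((hasDerivAt_arsinh (t / √s)).comp t ((hasDerivAt_id t).div_const √s)).congr_deriv ?_
  rw [div_pow, sq_sqrt hs.le, show 1 + t ^ 2 / s = (t ^ 2 + s) / s by field_simp; ring,
    sqrt_div (by positivity)]
  field_simp

theorem two_mul_one_sub_cos_add_pos (t : ℝ) {s : ℝ} (hs : 0 < s) : 0 < 2 * (1 - cos t) + s := by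
  linarith [cos_le_one t]

theorem one_sub_cos_div_sqrt_le_one (t : ℝ) {s : ℝ} (hs : 0 ≤ s) :
    (1 - cos t) / √(2 * (1 - cos t) + s) ≤ 1 := by
  refine div_le_one_of_le₀ (le_sqrt_of_sq_le ?_) (sqrt_nonneg _)
  nlinarith [cos_le_one t, neg_one_le_cos t]

theorem one_div_sqrt_two_mul_one_sub_cos_add_le {t s : ℝ} (ht₀ : 0 ≤ t) (htπ : t ≤ π)
    (hs : 0 < s) :
    1 / √(2 * (1 - cos t) + s) ≤ 1 / √(t ^ 2 + s) + t := by
  have hcos := cos_le_one_sub_sq_div_two_add_pow_four_div t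
  have ht2 : t ^ 2 ≤ 10 := by nlinarith [pi_lt_d2]
  have hb : t ^ 2 / 6 ≤ 2 * (1 - cos t) + s := by nlinarith
  have hD : 2 * (1 - cos t) + s ≤ t ^ 2 + s := by nlinarith [one_sub_sq_div_two_le_cos (x := t)]
  have hbpos := two_mul_one_sub_cos_add_pos t hs
  have hta : t ≤ √(t ^ 2 + s) := le_sqrt_of_sq_le (by linarith)
  suffices h :
      (t ^ 2 + s - (2 * (1 - cos t) + s)) / ((2 * (1 - cos t) + s) * √(t ^ 2 + s)) ≤ t by
    linarith [one_div_sqrt_sub_one_div_sqrt_le hbpos hD]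
  rw [div_le_iff₀ (mul_pos hbpos (sqrt_pos.2 (by positivity)))]
  calc t ^ 2 + s - (2 * (1 - cos t) + s) ≤ t * (t ^ 2 / 6) * t := by nlinarith
    _ ≤ t * ((2 * (1 - cos t) + s) * √(t ^ 2 + s)) := by
        rw [mul_assoc]; gcongr

theorem abs_cos_div_sqrt_sub_one_div_sqrt_le {t s : ℝ} (ht₀ : 0 ≤ t) (htπ : t ≤ π)
    (hs : 0 < s) :
    |cos t / √(2 * (1 - cos t) + s) - 1 / √(t ^ 2 + s)| ≤ π := by
  have h1 := one_sub_cos_div_sqrt_le_one t hs.le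
  have h2 : 1 / √(t ^ 2 + s) ≤ 1 / √(2 * (1 - cos t) + s) :=
    one_div_le_one_div_of_le (sqrt_pos.2 (two_mul_one_sub_cos_add_pos t hs))
      (sqrt_le_sqrt (by linarith [one_sub_sq_div_two_le_cos (x := t)]))
  have h3 := one_div_sqrt_two_mul_one_sub_cos_add_le ht₀ htπ hs
  have h0 : 0 ≤ (1 - cos t) / √(2 * (1 - cos t) + s) :=
    div_nonneg (by linarith [cos_le_one t]) (sqrt_nonneg _)
  have hsplit : cos t / √(2 * (1 - cos t) + s) =
      1 / √(2 * (1 - cos t) + s) - (1 - cos t) / √(2 * (1 - cos t) + s) := by ring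
  rw [abs_le, hsplit]
  constructor <;> linarith [pi_gt_three]

theorem abs_ringKernelF_sub_arsinh_le {s : ℝ} (hs : 0 < s) :
    |ringKernelF s - arsinh (π / √s)| ≤ π ^ 2 := by
  have hcont : Continuous fun t ↦ cos t / √(2 * (1 - cos t) + s) :=
    continuous_cos.div (by fun_prop) fun t ↦ (sqrt_pos.2 (two_mul_one_sub_cos_add_pos t hs)).ne'
  have h := intervalIntegral.norm_integral_le_of_norm_le_const (a := 0) (b := π) (C := π)
    (f := fun t ↦ cos t / √(2 * (1 - cos t) + s) - 1 / √(t ^ 2 + s)) fun t ht ↦ by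
      rw [Set.uIoc_of_le pi_pos.le] at ht
      exact abs_cos_div_sqrt_sub_one_div_sqrt_le ht.1.le ht.2 hs
  rwa [intervalIntegral.integral_sub (hcont.intervalIntegrable _ _)
      ((continuous_one_div_sqrt_sq_add hs).intervalIntegrable _ _),
    integral_one_div_sqrt_sq_add hs, zero_div, arsinh_zero, sub_zero, sub_zero,
    abs_of_pos pi_pos, norm_eq_abs, ← sq] at h

/-- Leading-order logarithmic asymptotics of `F`:
`F(s) = log(1/√s) + O(1)` on `(0, 1]`. -/
theorem ringKernelF_log_asymptotics :
    ∃ C > (0:ℝ), ∀ s ∈ Set.Ioc (0:ℝ) 1,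
      |ringKernelF s - Real.log (1 / Real.sqrt s)| ≤ C := by
  have hlog2π : 0 < log (2 * π) := log_pos (by linarith [pi_gt_three])
  refine ⟨π ^ 2 + log (2 * π) + 1, by positivity, fun s ⟨hs₀, hs₁⟩ ↦ ?_⟩
  have hss : 0 < √s := sqrt_pos.2 hs₀
  have hx : π ≤ π / √s := le_div_self pi_pos.le hss (sqrt_le_one.2 hs₁)
  have hF := abs_le.1 (abs_ringKernelF_sub_arsinh_le hs₀)
  have harsinh := abs_le.1 (abs_arsinh_sub_log_two_mul_le (pi_pos.trans_le hx))
  have hlog : log (2 * (π / √s)) = log (2 * π) + log (1 / √s) := by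
    rw [← log_mul (by positivity) (by positivity), mul_one_div, mul_div_assoc]
  have hsmall : 1 / (4 * (π / √s) ^ 2) ≤ 1 := by
    rw [div_le_one (by positivity)]
    nlinarith [pi_gt_three]
  rw [abs_le]
  constructor <;> linarith [hF.1, hF.2, harsinh.1, harsinh.2]
end

section
/- Let a, b, c ∈ ℝ with b > 0 and 16 |a| |c| ≤ b². Then there exists a unique t ∈ ℝ satisfying both a − b t = c t² and |c t| ≤ b/4. Moreover, this t satisfies |t − a/b| ≤ 16 |c| a² / b³. -/
/-!
The root `t = 2a / (b + √(b² + 4ac))` of `c t² + b t - a = 0` satisfies `|c t| ≤ 2|ac|/b ≤ b/8`.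
Two roots `t, t'` differ by a factor `b + c (t + t')` of `t - t'`, which cannot vanish when
`|c t|, |c t'| ≤ b/4`. Finally, any root with `|c t| ≤ b/4` has `b |t| ≤ |a| + b |t| / 4`,
so `|t| ≤ 4|a|/(3b)`, and `t - a/b = -c t² / b` gives the localization.
-/

namespace QuadraticSmallRoot

/-- `(-b + √(b² + 4ac)) / (2c)` with the numerator rationalized, which also makes sense at
`c = 0`. -/
noncomputable def smallRoot (a b c : ℝ) : ℝ :=
  2 * a / (b + √(b ^ 2 + 4 * (a * c)))

variable {a b c : ℝ}

theorem sub_mul_smallRoot_eq (hb : 0 < b) (hD : 0 ≤ b ^ 2 + 4 * (a * c)) :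
    a - b * smallRoot a b c = c * smallRoot a b c ^ 2 := by
  have hs := Real.sq_sqrt hD
  have hpos : 0 < b + √(b ^ 2 + 4 * (a * c)) := by positivity
  unfold smallRoot
  generalize √(b ^ 2 + 4 * (a * c)) = s at hs hpos
  field_simp
  linear_combination a * hs

theorem abs_mul_smallRoot_le (hb : 0 < b) : |c * smallRoot a b c| ≤ 2 * |a * c| / b := by
  have hle : b ≤ b + √(b ^ 2 + 4 * (a * c)) := le_add_of_nonneg_right (Real.sqrt_nonneg _)
  have hmul : c * smallRoot a b c = 2 * (a * c) / (b + √(b ^ 2 + 4 * (a * c))) := by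
    unfold smallRoot; ring
  rw [hmul, abs_div, abs_mul, abs_two, abs_of_pos (hb.trans_le hle)]
  gcongr

theorem eq_of_sub_mul_eq_mul_sq {t t' : ℝ} (ht : a - b * t = c * t ^ 2)
    (ht' : a - b * t' = c * t' ^ 2) (hsmall : |c * t| + |c * t'| < b) : t' = t := by
  have hfac : (t' - t) * (b + c * t + c * t') = 0 := by linear_combination ht - ht'
  have hne : b + c * t + c * t' ≠ 0 := by
    have := neg_abs_le (c * t)
    have := neg_abs_le (c * t')
    intro h0
    linarith
  exact sub_eq_zero.1 ((mul_eq_zero.1 hfac).resolve_right hne)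

theorem abs_le_of_sub_mul_eq_mul_sq {t : ℝ} (hb : 0 < b) (ht : a - b * t = c * t ^ 2)
    (hct : |c * t| ≤ b / 4) : 3 * b * |t| ≤ 4 * |a| := by
  have hbt : b * |t| ≤ |a| + |c * t| * |t| := by
    have hlin : b * t = a - c * t ^ 2 := by linear_combination -ht
    calc b * |t| = |a - c * t ^ 2| := by rw [← hlin, abs_mul, abs_of_pos hb]
      _ ≤ |a| + |c * t| * |t| := by
          rw [pow_two, ← mul_assoc, ← abs_mul]; exact abs_sub _ _
  nlinarith [abs_nonneg t]

theorem abs_sub_div_le_of_sub_mul_eq_mul_sq {t : ℝ} (hb : 0 < b) (ht : a - b * t = c * t ^ 2)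
    (hct : |c * t| ≤ b / 4) : |t - a / b| ≤ 16 * |c| * a ^ 2 / b ^ 3 := by
  have hdiff : t - a / b = -(c * t ^ 2) / b := by
    field_simp; linear_combination -ht
  have hsq : b ^ 2 * t ^ 2 ≤ 16 * a ^ 2 := by
    have hbt : b * |t| ≤ 4 * |a| := by
      linarith [abs_le_of_sub_mul_eq_mul_sq hb ht hct, mul_nonneg hb.le (abs_nonneg t)]
    calc b ^ 2 * t ^ 2 = (b * |t|) ^ 2 := by rw [mul_pow, sq_abs]
      _ ≤ (4 * |a|) ^ 2 := by gcongr
      _ = 16 * a ^ 2 := by rw [mul_pow, sq_abs]; norm_num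
  rw [hdiff, abs_div, abs_neg, abs_mul, abs_of_pos hb, abs_of_nonneg (sq_nonneg t),
    div_le_div_iff₀ hb (by positivity)]
  calc |c| * t ^ 2 * b ^ 3 = |c| * b * (b ^ 2 * t ^ 2) := by ring
    _ ≤ |c| * b * (16 * a ^ 2) := by gcongr
    _ = 16 * |c| * a ^ 2 * b := by ring

end QuadraticSmallRoot

open QuadraticSmallRoot in
/-- Localization of the small root of the quadratic equation `a − b t = c t²`
used in the Lyapunov–Schmidt reduction: under `b > 0` and `16 |a| |c| ≤ b²`, there is
a unique root `t` with `|c t| ≤ b/4`, and it satisfies `|t − a/b| ≤ 16 |c| a² / b³`. -/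
theorem quadratic_small_root (a b c : ℝ) (hb : 0 < b) (h : 16 * |a| * |c| ≤ b ^ 2) :
    ∃ t : ℝ, (a - b * t = c * t ^ 2 ∧ |c * t| ≤ b / 4) ∧
      |t - a / b| ≤ 16 * |c| * a ^ 2 / b ^ 3 ∧
      ∀ t' : ℝ, (a - b * t' = c * t' ^ 2 ∧ |c * t'| ≤ b / 4) → t' = t := by
  have hac : 16 * |a * c| ≤ b ^ 2 := by rwa [abs_mul, ← mul_assoc]
  have hD : 0 ≤ b ^ 2 + 4 * (a * c) := by linarith [neg_abs_le (a * c), sq_nonneg b]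
  have hroot := sub_mul_smallRoot_eq hb hD
  have hsmall : |c * smallRoot a b c| ≤ b / 4 := by
    calc |c * smallRoot a b c| ≤ 2 * |a * c| / b := abs_mul_smallRoot_le hb
      _ ≤ b / 4 := by rw [div_le_div_iff₀ hb four_pos]; nlinarith
  refine ⟨smallRoot a b c, ⟨hroot, hsmall⟩, abs_sub_div_le_of_sub_mul_eq_mul_sq hb hroot hsmall, ?_⟩
  rintro t' ⟨hroot', hsmall'⟩
  exact eq_of_sub_mul_eq_mul_sq hroot hroot' (by linarith)
end
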